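/- arXiv:2106.04969 — 10 statements merged into one kernel-verified Lean document; each statement's English description precedes it below -/
import Mathlib

section
/- For any κ > 0, K_W > 0, and |c| ≤ 1, the quartic equation χ⁴ − χ² − (κ/K_W)(χ + |c|)² = 0 has a unique positive real root χ, and this root satisfies χ > 1. -/
/-- Butman's quartic χ⁴ − χ² − (κ/K_W)(χ + |c|)² = 0 has a unique positive
root, and that root is greater than 1. -/
theorem butman_quartic_unique_positive_root
    (κ KW c : ℝ) (hκ : 0 < κ) (hKW : 0 < KW) (hc : |c| ≤ 1) :
    (∃! χ : ℝ, 0 < χ ∧ χ^4 - χ^2 - (κ / KW) * (χ + |c|)^2 = 0) ∧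
    (∀ χ : ℝ, 0 < χ → χ^4 - χ^2 - (κ / KW) * (χ + |c|)^2 = 0 → 1 < χ) := by
  set a := κ / KW with ha_def
  have ha : 0 < a := div_pos hκ hKW
  set b := |c| with hb_def
  have hb0 : 0 ≤ b := abs_nonneg c
  have hb1 : b ≤ 1 := hc
  -- Any positive root is > 1
  have hgt : ∀ χ : ℝ, 0 < χ → χ^4 - χ^2 - a * (χ + b)^2 = 0 → 1 < χ := by
    intro χ hχ heq
    have hpos : 0 < a * (χ + b)^2 :=
      mul_pos ha (pow_pos (by linarith) 2)
    by_contra h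
    push_neg at h
    have h2 : χ^2 ≤ 1 := by nlinarith
    nlinarith [mul_le_mul_of_nonneg_left h2 (sq_nonneg χ)]
  -- Strict monotonicity / injectivity of roots above 1
  have key : ∀ x y : ℝ, 1 < x → x < y →
      x^4 - x^2 - a * (x + b)^2 = 0 → y^4 - y^2 - a * (y + b)^2 = 0 → False := by
    intro x y hx hxy hex hey
    have hy : 1 < y := lt_trans hx hxy
    have h1 : (y^4 - y^2) * (x + b)^2 - (x^4 - x^2) * (y + b)^2 = 0 := by
      have e1 : x^4 - x^2 = a * (x + b)^2 := by linarith
      have e2 : y^4 - y^2 = a * (y + b)^2 := by linarith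
      rw [e1, e2]; ring
    have hfac : (y^4 - y^2) * (x + b)^2 - (x^4 - x^2) * (y + b)^2 =
        (y - x) * (x^2*y^2*(y+x) + 2*b*x*y*(y^2+x*y+x^2-1) + b^2*(y+x)*(y^2+x^2-1)) := by
      ring
    have hQ : 0 < x^2*y^2*(y+x) + 2*b*x*y*(y^2+x*y+x^2-1) + b^2*(y+x)*(y^2+x^2-1) := by
      have hx0 : 0 < x := by linarith
      have hy0 : 0 < y := by linarith
      have t1 : 0 < x^2*y^2*(y+x) :=
        mul_pos (mul_pos (pow_pos hx0 2) (pow_pos hy0 2)) (by linarith)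
      have s2 : (0:ℝ) ≤ y^2 + x*y + x^2 - 1 := by nlinarith
      have t2 : 0 ≤ 2*b*x*y*(y^2+x*y+x^2-1) := by
        have := mul_nonneg (mul_nonneg (mul_nonneg (by linarith : (0:ℝ) ≤ 2*b) hx0.le) hy0.le) s2
        linarith [this]
      have s3 : (0:ℝ) ≤ y^2 + x^2 - 1 := by nlinarith
      have t3 : 0 ≤ b^2*(y+x)*(y^2+x^2-1) :=
        mul_nonneg (mul_nonneg (sq_nonneg b) (by linarith)) s3
      linarith
    have hyx : 0 < y - x := by linarith
    nlinarith [mul_pos hyx hQ]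
  -- Existence via IVT on [1, a+2]
  set M := a + 2 with hM_def
  have hM2 : (2:ℝ) ≤ M := by linarith
  have h1M : (1:ℝ) ≤ M := by linarith
  have hf1 : (1:ℝ)^4 - 1^2 - a * (1 + b)^2 < 0 := by
    have : 0 < a * (1 + b)^2 := mul_pos ha (pow_pos (by linarith) 2)
    nlinarith
  have hfM : 0 < M^4 - M^2 - a * (M + b)^2 := by
    have hsq : (M + b)^2 ≤ (M + 1)^2 := by nlinarith
    have hle : a * (M + b)^2 ≤ a * (M + 1)^2 :=
      mul_le_mul_of_nonneg_left hsq ha.le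
    have haM : a = M - 2 := by linarith
    nlinarith [pow_pos (by linarith : (0:ℝ) < M) 3, sq_nonneg M]
  have hcont : ContinuousOn (fun χ : ℝ => χ^4 - χ^2 - a * (χ + b)^2) (Set.Icc 1 M) := by
    fun_prop
  obtain ⟨x, hxmem, hxeq⟩ := intermediate_value_Icc h1M hcont ⟨le_of_lt hf1, le_of_lt hfM⟩
  simp only at hxeq
  have hx0 : 0 < x := lt_of_lt_of_le one_pos hxmem.1
  refine ⟨⟨x, ⟨hx0, hxeq⟩, ?_⟩, hgt⟩
  rintro y ⟨hy0, hyeq⟩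
  have hx1 : 1 < x := hgt x hx0 hxeq
  have hy1 : 1 < y := hgt y hy0 hyeq
  rcases lt_trichotomy y x with h | h | h
  · exact absurd (key y x hy1 h hyeq hxeq) (fun f => f)
  · exact h
  · exact absurd (key x y hx1 h hxeq hyeq) (fun f => f)
end

section
/- The positive root χ of Butman's quartic χ⁴ − χ² − (κ/K_W)(χ + |c|)² = 0 is a strictly increasing function of |c| on [0,1], for fixed κ > 0 and K_W > 0. -/
/-- Monotonicity of x ↦ (x⁴-x²)/(x+b)² on [1,∞) for b ≥ 0, in cleared form. -/
lemma butman_aux (b x y : ℝ) (hb : 0 ≤ b) (hx : 1 ≤ x) (hxy : x ≤ y) :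
    (x^4 - x^2) * (y + b)^2 ≤ (y^4 - y^2) * (x + b)^2 := by
  have hd : 0 ≤ y - x := sub_nonneg.2 hxy
  have hx0 : 0 < x := lt_of_lt_of_le one_pos hx
  have hy : 1 ≤ y := hx.trans hxy
  have hy0 : 0 < y := lt_of_lt_of_le one_pos hy
  have t1 : 0 ≤ x^2*y^2*((y-x)*(y+x)) := by positivity
  have t2 : 0 ≤ 2*b*x*y*((y-x)*(x^2+x*y+y^2-1)) := by
    have h1 : 0 ≤ x^2+x*y+y^2-1 := by nlinarith
    have := mul_nonneg hd h1
    positivity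
  have t3 : 0 ≤ b^2*((y-x)*(y+x)*(x^2+y^2-1)) := by
    have h1 : 0 ≤ x^2+y^2-1 := by nlinarith
    have := mul_nonneg (mul_nonneg hd (by positivity : (0:ℝ) ≤ y+x)) h1
    positivity
  have key : (y^4-y^2)*(x+b)^2 - (x^4-x^2)*(y+b)^2
      = x^2*y^2*((y-x)*(y+x)) + 2*b*x*y*((y-x)*(x^2+x*y+y^2-1))
        + b^2*((y-x)*(y+x)*(x^2+y^2-1)) := by ring
  linarith


lemma butman_gt_one (r b χ : ℝ) (hr : 0 < r) (hb : 0 ≤ b) (hχ : 0 < χ)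
    (hroot : χ^4 - χ^2 - r * (χ + b)^2 = 0) : 1 < χ := by
  have hs : χ^2 ≤ (χ + b)^2 := by nlinarith
  have hsq := mul_le_mul_of_nonneg_left hs hr.le
  have hposr : 0 < r * χ^2 := by positivity
  have hgt : 0 < χ^4 - χ^2 := by linarith
  by_contra hc
  push_neg at hc
  have : 0 ≤ χ^2 * (1 - χ) * (χ + 1) :=
    mul_nonneg (mul_nonneg (sq_nonneg χ) (by linarith)) (by linarith)
  nlinarith

/-- The positive root of Butman's quartic is strictly increasing in |c| on [0,1]. -/
theorem butman_root_strict_mono_in_c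
    (κ KW : ℝ) (hκ : 0 < κ) (hKW : 0 < KW)
    (b₁ b₂ χ₁ χ₂ : ℝ)
    (hb₁ : 0 ≤ b₁) (hb₂ : b₂ ≤ 1) (hb : b₁ < b₂)
    (hχ₁pos : 0 < χ₁) (hχ₂pos : 0 < χ₂)
    (hroot₁ : χ₁^4 - χ₁^2 - (κ / KW) * (χ₁ + b₁)^2 = 0)
    (hroot₂ : χ₂^4 - χ₂^2 - (κ / KW) * (χ₂ + b₂)^2 = 0) :
    χ₁ < χ₂ := by
  set r := κ / KW with hr
  have hrpos : 0 < r := div_pos hκ hKW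
  have hb₂0 : 0 ≤ b₂ := hb₁.trans hb.le
  -- χ₁ > 1 and χ₂ > 1
  have h1 : 1 < χ₁ := butman_gt_one r b₁ χ₁ hrpos hb₁ hχ₁pos hroot₁
  have h2 : 1 < χ₂ := butman_gt_one r b₂ χ₂ hrpos hb₂0 hχ₂pos hroot₂
  by_contra h
  push_neg at h  -- χ₂ ≤ χ₁
  have key := butman_aux b₂ χ₂ χ₁ hb₂0 h2.le h
  have e1 : χ₁^4 - χ₁^2 = r * (χ₁ + b₁)^2 := by linarith
  have e2 : χ₂^4 - χ₂^2 = r * (χ₂ + b₂)^2 := by linarith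
  rw [e1, e2] at key
  have hlt : (χ₁ + b₁)^2 < (χ₁ + b₂)^2 := by nlinarith
  have hp2 : 0 < (χ₂ + b₂)^2 := by positivity
  nlinarith [mul_pos hrpos hp2, sq_nonneg (χ₁ + b₂)]
end

section
/- The positive root χ of Butman's quartic χ⁴ − χ² − (κ/K_W)(χ + |c|)² = 0 is a strictly increasing function of κ > 0, for fixed K_W > 0 and |c| ≤ 1. -/
/-!
Solving the quartic for κ gives `κ / K_W = (χ⁴ - χ²) / (χ + |c|)²`. A positive root for `κ > 0`
has `χ > 1`, and on `(1, ∞)` this ratio is strictly increasing, because for `1 < a < b` and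
`c ≥ 0` the cross-multiplied difference factors as `(b - a)` times a sum of nonnegative terms.
So the root, being the inverse of a strictly increasing function, increases with κ.
-/

open Set

noncomputable def butmanRatio (c χ : ℝ) : ℝ := (χ ^ 4 - χ ^ 2) / (χ + c) ^ 2

lemma butmanRatio_eq_of_root {KW c κ χ : ℝ} (hχc : χ + c ≠ 0)
    (hroot : χ ^ 4 - χ ^ 2 - (κ / KW) * (χ + c) ^ 2 = 0) :
    butmanRatio c χ = κ / KW := by
  rw [butmanRatio, div_eq_iff (pow_ne_zero 2 hχc)]
  linarith

lemma one_lt_of_butmanRatio_pos {c χ : ℝ} (hχ : 0 < χ) (h : 0 < butmanRatio c χ) : 1 < χ := by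
  have hnum : 0 < χ ^ 2 * (χ ^ 2 - 1) := by
    by_contra! hle
    exact h.not_ge (div_nonpos_of_nonpos_of_nonneg (by linarith) (sq_nonneg _))
  have hsq : 1 < χ ^ 2 := by linarith [pos_of_mul_pos_right hnum (sq_nonneg χ)]
  exact (one_lt_sq_iff₀ hχ.le).mp hsq

lemma butmanRatio_strictMonoOn {c : ℝ} (hc : 0 ≤ c) : StrictMonoOn (butmanRatio c) (Ioi 1) := by
  intro a (ha : 1 < a) b (hb : 1 < b) hab
  rw [butmanRatio, butmanRatio, div_lt_div_iff₀ (by positivity) (by positivity)]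
  have hfactor : (b ^ 4 - b ^ 2) * (a + c) ^ 2 - (a ^ 4 - a ^ 2) * (b + c) ^ 2 =
      (b - a) * (a ^ 2 * b ^ 2 * (a + b) + 2 * a * b * c * (a ^ 2 + a * b + b ^ 2 - 1)
        + c ^ 2 * (a + b) * (a ^ 2 + b ^ 2 - 1)) := by ring
  have hpos : 0 < a ^ 2 * b ^ 2 * (a + b) + 2 * a * b * c * (a ^ 2 + a * b + b ^ 2 - 1)
      + c ^ 2 * (a + b) * (a ^ 2 + b ^ 2 - 1) := by
    have h₁ : 0 < a ^ 2 * b ^ 2 * (a + b) := by positivity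
    have h₂ : 0 ≤ 2 * a * b * c * (a ^ 2 + a * b + b ^ 2 - 1) :=
      mul_nonneg (by positivity) (by nlinarith)
    have h₃ : 0 ≤ c ^ 2 * (a + b) * (a ^ 2 + b ^ 2 - 1) :=
      mul_nonneg (by positivity) (by nlinarith)
    linarith
  nlinarith [mul_pos (sub_pos.2 hab) hpos]

theorem butman_root_strict_mono_in_kappa_general
    (KW c : ℝ) (hKW : 0 < KW)
    (κ₁ κ₂ χ₁ χ₂ : ℝ)
    (hκ₁ : 0 < κ₁) (hκ : κ₁ < κ₂)
    (hχ₁pos : 0 < χ₁) (hχ₂pos : 0 < χ₂)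
    (hroot₁ : χ₁^4 - χ₁^2 - (κ₁ / KW) * (χ₁ + |c|)^2 = 0)
    (hroot₂ : χ₂^4 - χ₂^2 - (κ₂ / KW) * (χ₂ + |c|)^2 = 0) :
    χ₁ < χ₂ := by
  have hc₀ : 0 ≤ |c| := abs_nonneg c
  have h₁ : butmanRatio |c| χ₁ = κ₁ / KW := butmanRatio_eq_of_root (by positivity) hroot₁
  have h₂ : butmanRatio |c| χ₂ = κ₂ / KW := butmanRatio_eq_of_root (by positivity) hroot₂
  have hlt : κ₁ / KW < κ₂ / KW := div_lt_div_of_pos_right hκ hKW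
  have hpos₁ : 0 < butmanRatio |c| χ₁ := h₁ ▸ div_pos hκ₁ hKW
  have hχ₁ : 1 < χ₁ := one_lt_of_butmanRatio_pos hχ₁pos hpos₁
  have hχ₂ : 1 < χ₂ := one_lt_of_butmanRatio_pos hχ₂pos (hpos₁.trans (h₁ ▸ h₂ ▸ hlt))
  exact ((butmanRatio_strictMonoOn hc₀).lt_iff_lt hχ₁ hχ₂).mp (h₁ ▸ h₂ ▸ hlt)

/-- The positive root of Butman's quartic is strictly increasing in κ. -/
theorem butman_root_strict_mono_in_kappa
    (KW c : ℝ) (hKW : 0 < KW) (hc : |c| ≤ 1)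
    (κ₁ κ₂ χ₁ χ₂ : ℝ)
    (hκ₁ : 0 < κ₁) (hκ : κ₁ < κ₂)
    (hχ₁pos : 0 < χ₁) (hχ₂pos : 0 < χ₂)
    (hroot₁ : χ₁^4 - χ₁^2 - (κ₁ / KW) * (χ₁ + |c|)^2 = 0)
    (hroot₂ : χ₂^4 - χ₂^2 - (κ₂ / KW) * (χ₂ + |c|)^2 = 0) :
    χ₁ < χ₂ :=
  butman_root_strict_mono_in_kappa_general KW c hKW κ₁ κ₂ χ₁ χ₂ hκ₁ hκ hχ₁pos hχ₂pos hroot₁ hroot₂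
end

section
/- Let a, c, K_W, κ be reals with K_W > 0, κ > 0, c ∉ {−1, 0, 1}, c ≠ a, and let g = K_W(2a − c + a²c³ − 2a²c) + cκ(c² − 1)², K* = g/(c(c² − 1)(a − c)²), Λ* = K_W(a − c)²(1 − ac)/g, K_Z* = (cκ(c² − 1)g − K_W²(a − c)²(1 − ac)²)/(c(c² − 1)g). If g ≠ 0, then ((Λ* + c − a)² K* + K_Z* + K_W)/K_W = (cK_W(c − 2a + a²c) + c²κ(c² − 1))/(K_W(c² − 1)), i.e., the closed-form capacity expression (1/2)log((Λ* + c − a)² K* + K_Z* + K_W)/K_W) equals (1/2)log((cK_W(c − 2a + a²c) + c²κ(c² − 1))/(K_W(c² − 1))). -/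
/-!
Writing `D = c(c² - 1)`, `m = a - c` and `q = K_W m (1 - ac)`, one has `Λ* + c - a = m (q - g) / g`,
`K* = g / (D m²)` and `K_Z* = κ - q² / (D g)`. In the sum `(Λ* + c - a)² K* + K_Z*` the terms `q²/(D g)`
cancel and what remains is `(g - 2q)/D + κ`, which is linear in `g`; substituting `g` gives the claim.
-/

theorem sq_sub_mul_div_add_div_eq {K : Type*} [Field K] {g D m : K} (hg : g ≠ 0) (hD : D ≠ 0)
    (hm : m ≠ 0) (q κ : K) :
    (q * m / g - m) ^ 2 * (g / (D * m ^ 2)) + (κ * D * g - q ^ 2) / (D * g) = (g - 2 * q) / D + κ := by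
  field_simp
  ring

theorem sq_sub_one_ne_zero {R : Type*} [Ring R] [NoZeroDivisors R] {c : R} (hc1 : c ≠ 1)
    (hcm1 : c ≠ -1) : c ^ 2 - 1 ≠ 0 :=
  sub_ne_zero.mpr fun h => (sq_eq_one_iff.mp h).elim hc1 hcm1

theorem capacity_closed_form_identity_general
    (a c KW κ : ℝ) (hKW : 0 < KW)
    (hcm1 : c ≠ -1) (hc0 : c ≠ 0) (hc1 : c ≠ 1) (hca : c ≠ a)
    (g : ℝ) (hg_def : g = KW * (2*a - c + a^2*c^3 - 2*a^2*c) + c*κ*(c^2 - 1)^2)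
    (hg : g ≠ 0) :
    let Kstar := g / (c * (c^2 - 1) * (a - c)^2)
    let Λstar := KW * (a - c)^2 * (1 - a*c) / g
    let KZstar := (c*κ*(c^2 - 1)*g - KW^2*(a - c)^2*(1 - a*c)^2) / (c*(c^2 - 1)*g)
    ((Λstar + c - a)^2 * Kstar + KZstar + KW) / KW
      = (c*KW*(c - 2*a + a^2*c) + c^2*κ*(c^2 - 1)) / (KW*(c^2 - 1)) ∧
    (1/2) * Real.log (((Λstar + c - a)^2 * Kstar + KZstar + KW) / KW)
      = (1/2) * Real.log ((c*KW*(c - 2*a + a^2*c) + c^2*κ*(c^2 - 1)) / (KW*(c^2 - 1))) := by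
  intro Kstar Λstar KZstar
  have hc2 : c ^ 2 - 1 ≠ 0 := sq_sub_one_ne_zero hc1 hcm1
  have hD : c * (c ^ 2 - 1) ≠ 0 := mul_ne_zero hc0 hc2
  have cancel := sq_sub_mul_div_add_div_eq hg hD (sub_ne_zero.mpr hca.symm)
    (KW * (a - c) * (1 - a * c)) κ
  have hΛ : Λstar + c - a = KW * (a - c) * (1 - a * c) * (a - c) / g - (a - c) := by ring
  have hKZ : KZstar = (κ * (c * (c ^ 2 - 1)) * g - (KW * (a - c) * (1 - a * c)) ^ 2)
      / (c * (c ^ 2 - 1) * g) := by ring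
  have key : ((Λstar + c - a)^2 * Kstar + KZstar + KW) / KW
      = (c*KW*(c - 2*a + a^2*c) + c^2*κ*(c^2 - 1)) / (KW*(c^2 - 1)) := by
    rw [hΛ, hKZ, cancel, hg_def]
    field_simp
    ring
  exact ⟨key, by rw [key]⟩

/-- The closed-form capacity expression simplifies as claimed in Theorem 5. -/
theorem capacity_closed_form_identity
    (a c KW κ : ℝ) (hKW : 0 < KW) (hκ : 0 < κ)
    (hcm1 : c ≠ -1) (hc0 : c ≠ 0) (hc1 : c ≠ 1) (hca : c ≠ a)
    (g : ℝ) (hg_def : g = KW * (2*a - c + a^2*c^3 - 2*a^2*c) + c*κ*(c^2 - 1)^2)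
    (hg : g ≠ 0) :
    let Kstar := g / (c * (c^2 - 1) * (a - c)^2)
    let Λstar := KW * (a - c)^2 * (1 - a*c) / g
    let KZstar := (c*κ*(c^2 - 1)*g - KW^2*(a - c)^2*(1 - a*c)^2) / (c*(c^2 - 1)*g)
    ((Λstar + c - a)^2 * Kstar + KZstar + KW) / KW
      = (c*KW*(c - 2*a + a^2*c) + c^2*κ*(c^2 - 1)) / (KW*(c^2 - 1)) ∧
    (1/2) * Real.log (((Λstar + c - a)^2 * Kstar + KZstar + KW) / KW)
      = (1/2) * Real.log ((c*KW*(c - 2*a + a^2*c) + c^2*κ*(c^2 - 1)) / (KW*(c^2 - 1))) :=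
  capacity_closed_form_identity_general a c KW κ hKW hcm1 hc0 hc1 hca g hg_def hg
end

section
/- Let a, c, K_W, κ be reals with K_W > 0, κ > 0, c ∉ {−1, 0, 1}, c ≠ a, g = K_W(2a − c + a²c³ − 2a²c) + cκ(c² − 1)² with g ≠ 0, and define K* = g/(c(c² − 1)(a − c)²), Λ* = K_W(a − c)²(1 − ac)/g, K_Z* = (cκ(c² − 1)g − K_W²(a − c)²(1 − ac)²)/(c(c² − 1)g). Then K* satisfies the algebraic Riccati equation K = c²K + K_W − (K_W + cK(Λ* + c − a))² / (K_Z* + K_W + (Λ* + c − a)²K). -/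
/-!
With `h := K_W (a²c − 2a + c) + cκ(c² − 1)` one has `g = (c² − 1) h − c K_W (a − c)²`, and in terms of
`h` the three pieces of the Riccati equation at `(K*, Λ*, K_Z*)` become
`K_W + c K* (Λ* + c − a) = h / (c − a)`, `K_Z* + K_W + (Λ* + c − a)² K* = c h / (c² − 1)` and
`(c² − 1) K* + K_W = (c² − 1) h / (c (a − c)²)`. The ratio of the square of the first to the second
is the third, also when `h = 0`.
-/

theorem div_sq_div_mul_self {𝕜 : Type*} [Field 𝕜] (h x y : 𝕜) :
    (h / x) ^ 2 / (y * h) = h / (x ^ 2 * y) := by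
  rcases eq_or_ne h 0 with rfl | _
  · simp
  · field_simp

section RiccatiTriple

variable {𝕜 : Type*} [Field 𝕜] (a c KW κ : 𝕜)

def riccatiG : 𝕜 := KW * (2*a - c + a^2*c^3 - 2*a^2*c) + c*κ*(c^2 - 1)^2

def riccatiH : 𝕜 := KW * (a^2*c - 2*a + c) + c*κ*(c^2 - 1)

def kStar : 𝕜 := riccatiG a c KW κ / (c * (c^2 - 1) * (a - c)^2)

def lambdaStar : 𝕜 := KW * (a - c)^2 * (1 - a*c) / riccatiG a c KW κ

def kZStar : 𝕜 :=
  (c*κ*(c^2 - 1)*riccatiG a c KW κ - KW^2*(a - c)^2*(1 - a*c)^2) / (c*(c^2 - 1)*riccatiG a c KW κ)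

variable {a c KW κ}

theorem kW_add_mul_kStar_mul_eq (hc : c ≠ 0) (hc2 : c^2 ≠ 1) (hac : a ≠ c)
    (hg : riccatiG a c KW κ ≠ 0) :
    KW + c * kStar a c KW κ * (lambdaStar a c KW κ + c - a) = riccatiH a c KW κ / (c - a) := by
  have hac' : a - c ≠ 0 := sub_ne_zero.2 hac
  have hca : c - a ≠ 0 := sub_ne_zero.2 hac.symm
  have hc2' : c^2 - 1 ≠ 0 := sub_ne_zero.2 hc2
  unfold kStar lambdaStar riccatiH
  field_simp
  unfold riccatiG
  ring

theorem kZStar_add_kW_add_sq_mul_kStar_eq (hc : c ≠ 0) (hc2 : c^2 ≠ 1) (hac : a ≠ c)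
    (hg : riccatiG a c KW κ ≠ 0) :
    kZStar a c KW κ + KW + (lambdaStar a c KW κ + c - a)^2 * kStar a c KW κ
      = c / (c^2 - 1) * riccatiH a c KW κ := by
  have hac' : a - c ≠ 0 := sub_ne_zero.2 hac
  have hc2' : c^2 - 1 ≠ 0 := sub_ne_zero.2 hc2
  unfold kStar lambdaStar kZStar riccatiH
  field_simp
  unfold riccatiG
  ring

theorem sq_mul_kStar_add_kW_sub_kStar_eq (hc : c ≠ 0) (hc2 : c^2 ≠ 1) (hac : a ≠ c) :
    c^2 * kStar a c KW κ + KW - kStar a c KW κ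
      = riccatiH a c KW κ / ((c - a)^2 * (c / (c^2 - 1))) := by
  have hac' : a - c ≠ 0 := sub_ne_zero.2 hac
  have hc2' : c^2 - 1 ≠ 0 := sub_ne_zero.2 hc2
  unfold kStar riccatiH
  field_simp
  unfold riccatiG
  ring

theorem kStar_solves_riccati (hc : c ≠ 0) (hc2 : c^2 ≠ 1) (hac : a ≠ c)
    (hg : riccatiG a c KW κ ≠ 0) :
    kStar a c KW κ = c^2 * kStar a c KW κ + KW
      - (KW + c * kStar a c KW κ * (lambdaStar a c KW κ + c - a))^2
        / (kZStar a c KW κ + KW + (lambdaStar a c KW κ + c - a)^2 * kStar a c KW κ) := by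
  rw [kW_add_mul_kStar_mul_eq hc hc2 hac hg, kZStar_add_kW_add_sq_mul_kStar_eq hc hc2 hac hg,
    div_sq_div_mul_self, ← sq_mul_kStar_add_kW_sub_kStar_eq hc hc2 hac, sub_sub_cancel]

end RiccatiTriple

theorem optimal_triple_solves_ARE_general
    (a c KW κ : ℝ) (hcm1 : c ≠ -1) (hc0 : c ≠ 0) (hc1 : c ≠ 1) (hca : c ≠ a)
    (g : ℝ) (hg_def : g = KW * (2*a - c + a^2*c^3 - 2*a^2*c) + c*κ*(c^2 - 1)^2)
    (hg : g ≠ 0) :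
    let Kstar := g / (c * (c^2 - 1) * (a - c)^2)
    let Λstar := KW * (a - c)^2 * (1 - a*c) / g
    let KZstar := (c*κ*(c^2 - 1)*g - KW^2*(a - c)^2*(1 - a*c)^2) / (c*(c^2 - 1)*g)
    Kstar = c^2 * Kstar + KW
      - (KW + c*Kstar*(Λstar + c - a))^2
        / (KZstar + KW + (Λstar + c - a)^2 * Kstar) := by
  subst hg_def
  exact kStar_solves_riccati hc0 (by simp [sq_eq_one_iff, hc1, hcm1]) (Ne.symm hca) hg

/-- The triple (K*, Λ*, K_Z*) of Theorem 5 solves the algebraic Riccati equation. -/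
theorem optimal_triple_solves_ARE
    (a c KW κ : ℝ) (hKW : 0 < KW) (hκ : 0 < κ)
    (hcm1 : c ≠ -1) (hc0 : c ≠ 0) (hc1 : c ≠ 1) (hca : c ≠ a)
    (g : ℝ) (hg_def : g = KW * (2*a - c + a^2*c^3 - 2*a^2*c) + c*κ*(c^2 - 1)^2)
    (hg : g ≠ 0) :
    let Kstar := g / (c * (c^2 - 1) * (a - c)^2)
    let Λstar := KW * (a - c)^2 * (1 - a*c) / g
    let KZstar := (c*κ*(c^2 - 1)*g - KW^2*(a - c)^2*(1 - a*c)^2) / (c*(c^2 - 1)*g)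
    Kstar = c^2 * Kstar + KW
      - (KW + c*Kstar*(Λstar + c - a))^2
        / (KZstar + KW + (Λstar + c - a)^2 * Kstar) :=
  optimal_triple_solves_ARE_general a c KW κ hcm1 hc0 hc1 hca g hg_def hg
end

section
/- Let c, a, K_W, κ be reals with K_W > 0, κ > 0, c ≠ a, h = κ(1 − c²) + K_W(1 − a²), and K∞ = (−h + √(h² + 4(c − a)² K_W κ))/(2(c − a)²). Then K∞ satisfies the algebraic Riccati equation K = c²K + K_W − (K_W + cK(c − a))²/(κ + K_W + (c − a)²K). -/
/-- The closed-form K∞ of Theorem 6 solves the ARE of the nonfeedback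
(IID input) strategy. -/
theorem nonfeedback_Kinfty_solves_ARE
    (c a KW κ : ℝ) (hKW : 0 < KW) (hκ : 0 < κ) (hca : c ≠ a) :
    let h := κ*(1 - c^2) + KW*(1 - a^2)
    let Kinf := (-h + Real.sqrt (h^2 + 4*(c - a)^2*KW*κ)) / (2*(c - a)^2)
    Kinf = c^2*Kinf + KW
      - (KW + c*Kinf*(c - a))^2 / (κ + KW + (c - a)^2*Kinf) := by
  intro h Kinf
  have hd : c - a ≠ 0 := sub_ne_zero.mpr hca
  have hd2 : (0:ℝ) < (c - a)^2 := by positivity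
  have hhdef : h = κ*(1 - c^2) + KW*(1 - a^2) := rfl
  have hKdef : Kinf = (-h + Real.sqrt (h^2 + 4*(c - a)^2*KW*κ)) / (2*(c - a)^2) := rfl
  clear_value Kinf h
  set s := Real.sqrt (h^2 + 4*(c - a)^2*KW*κ) with hs
  have hsnn : 0 ≤ s := Real.sqrt_nonneg _
  have hssq : s^2 = h^2 + 4*(c - a)^2*KW*κ := by
    rw [hs, Real.sq_sqrt]; positivity
  have hsgt : |h| < s := by
    have h1 : (|h|)^2 < s^2 := by
      rw [sq_abs]
      have hp : 0 < 4*(c - a)^2*KW*κ := by positivity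
      linarith
    nlinarith [abs_nonneg h]
  have hKpos : 0 < Kinf := by
    rw [hKdef]
    have h1 : 0 < -h + s := by
      have := le_abs_self h
      linarith
    exact div_pos h1 (by positivity)
  have hden' : κ + KW + (c - a)^2*Kinf ≠ 0 := by positivity
  have hK2 : (c - a)^2*Kinf^2 + h*Kinf - KW*κ = 0 := by
    rw [hKdef]
    field_simp
    nlinarith [hssq]
  have key : (KW + c*Kinf*(c - a))^2
      = (c^2*Kinf + KW - Kinf) * (κ + KW + (c - a)^2*Kinf) := by
    rw [hhdef] at hK2
    linear_combination hK2
  rw [key, mul_div_assoc, div_self hden', mul_one]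
  ring
end

section
/- Let c, a, K_W, κ be reals with K_W > 0, κ > 0, c ≠ a, h = κ(1 − c²) + K_W(1 − a²), and K∞ = (−h + √(h² + 4(c − a)²K_W κ))/(2(c − a)²). Then the equation K = c²K + K_W − (K_W + cK(c − a))²/(κ + K_W + (c − a)²K) has exactly one nonnegative real solution, namely K∞. -/
/-- K∞ is the unique nonnegative solution of the nonfeedback ARE. -/
theorem nonfeedback_ARE_unique_nonneg_solution
    (c a KW κ : ℝ) (hKW : 0 < KW) (hκ : 0 < κ) (hca : c ≠ a) :
    let h := κ*(1 - c^2) + KW*(1 - a^2)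
    let Kinf := (-h + Real.sqrt (h^2 + 4*(c - a)^2*KW*κ)) / (2*(c - a)^2)
    ∀ K : ℝ,
      (0 ≤ K ∧ K = c^2*K + KW - (KW + c*K*(c - a))^2 / (κ + KW + (c - a)^2*K))
        ↔ K = Kinf := by
  intro h Kinf K
  have hd : c - a ≠ 0 := sub_ne_zero.mpr hca
  have hd2 : (0:ℝ) < (c - a)^2 := by positivity
  have hKinf : Kinf = (-(κ*(1 - c^2) + KW*(1 - a^2)) +
      Real.sqrt ((κ*(1 - c^2) + KW*(1 - a^2))^2 + 4*(c - a)^2*KW*κ)) / (2*(c - a)^2) := rfl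
  set H := κ*(1 - c^2) + KW*(1 - a^2) with hH
  set s := Real.sqrt (H^2 + 4*(c - a)^2*KW*κ) with hs_def
  have hpos : (0:ℝ) < 4*(c - a)^2*KW*κ := by positivity
  have harg : (0:ℝ) < H^2 + 4*(c - a)^2*KW*κ := by positivity
  have hs2 : s^2 = H^2 + 4*(c - a)^2*KW*κ := Real.sq_sqrt harg.le
  have hs0 : 0 ≤ s := Real.sqrt_nonneg _
  have hsgt : |H| < s := by
    have h1 : Real.sqrt (H^2) < s := by
      rw [hs_def]
      exact Real.sqrt_lt_sqrt (sq_nonneg H) (by linarith)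
    rwa [Real.sqrt_sq_eq_abs] at h1
  have hHs : H < s := lt_of_le_of_lt (le_abs_self H) hsgt
  have hnHs : -H < s := lt_of_le_of_lt (neg_le_abs H) hsgt
  have hKinf_pos : 0 < Kinf := by
    rw [hKinf]
    apply div_pos _ (by positivity)
    linarith
  constructor
  · rintro ⟨hK0, heq⟩
    have hD : (0:ℝ) < κ + KW + (c - a)^2*K := by positivity
    have e1 : (KW + c*K*(c - a))^2
        = (c^2*K + KW - K) * (κ + KW + (c - a)^2*K) := by
      field_simp at heq
      linarith [heq]
    have key : (c - a)^2*K^2 + H*K - KW*κ = 0 := by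
      rw [hH]; linear_combination e1
    have hKpos : 0 < K := by
      rcases hK0.lt_or_eq with h' | h'
      · exact h'
      · exfalso; rw [← h'] at key; nlinarith
    have hX : 0 < 2*(c - a)^2*K + H := by nlinarith
    have hsq : (2*(c - a)^2*K + H)^2 = s^2 := by
      linear_combination 4*(c - a)^2*key - hs2
    have hXs : 2*(c - a)^2*K + H = s := by
      have h1 : (2*(c - a)^2*K + H - s)*(2*(c - a)^2*K + H + s) = 0 := by
        linear_combination hsq
      rcases mul_eq_zero.mp h1 with h2 | h2
      · linarith
      · exfalso; linarith
    rw [hKinf]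
    field_simp
    linarith
  · intro hKeq
    have hKval : K = (-H + s) / (2*(c - a)^2) := by rw [hKeq, hKinf]
    have hE : 2*(c - a)^2*K = -H + s := by
      rw [hKval]; field_simp
    have key4 : 4*(c - a)^2*((c - a)^2*K^2 + H*K - KW*κ) = 0 := by
      linear_combination (2*(c - a)^2*K + H + s) * hE + hs2
    have keyinf : (c - a)^2*K^2 + H*K - KW*κ = 0 := by
      rcases mul_eq_zero.mp key4 with h' | h'
      · exact absurd h' (by positivity)
      · exact h'
    have hKpos : 0 < K := hKeq ▸ hKinf_pos
    refine ⟨hKpos.le, ?_⟩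
    have hD : (0:ℝ) < κ + KW + (c - a)^2*K := by positivity
    field_simp
    linear_combination keyinf
end

section
/- For c > 1, a ∈ [−c/(c² − 2), 1/c] with c² ≠ 2, and K_W > 0, the threshold κ_min = K_W(1 − ac)(2ac − ac³ − c² + √(c³(a²c³ − 6ac² + 4a + 4c³ − 3c)))/(2c²(c² − 1)²) satisfies κ_min ≥ 0. -/
/-- The power threshold κ_min of Theorem 5 (Regime A) is nonnegative. -/
theorem kappa_min_nonneg
    (KW c a : ℝ) (hKW : 0 < KW) (hc : 1 < c) (hc2 : c^2 ≠ 2)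
    (ha₁ : -c/(c^2 - 2) ≤ a) (ha₂ : a ≤ 1/c) :
    0 ≤ KW*(1 - a*c)*(2*a*c - a*c^3 - c^2
          + Real.sqrt (c^3*(a^2*c^3 - 6*a*c^2 + 4*a + 4*c^3 - 3*c)))
        / (2*c^2*(c^2 - 1)^2) := by
  have hc0 : (0:ℝ) < c := lt_trans one_pos hc
  have hac : a * c ≤ 1 := by
    have := mul_le_mul_of_nonneg_right ha₂ hc0.le
    rwa [one_div, inv_mul_cancel₀ hc0.ne'] at this
  have hid : c^3*(a^2*c^3 - 6*a*c^2 + 4*a + 4*c^3 - 3*c)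
      = (c^2 + a*c^3 - 2*a*c)^2 + 4*c^2*(c^2-1)*(c-a)^2 := by ring
  have hsq : c^2 + a*c^3 - 2*a*c
      ≤ Real.sqrt (c^3*(a^2*c^3 - 6*a*c^2 + 4*a + 4*c^3 - 3*c)) := by
    calc c^2 + a*c^3 - 2*a*c ≤ |c^2 + a*c^3 - 2*a*c| := le_abs_self _
      _ = Real.sqrt ((c^2 + a*c^3 - 2*a*c)^2) := (Real.sqrt_sq_eq_abs _).symm
      _ ≤ _ := by
          apply Real.sqrt_le_sqrt
          rw [hid]
          have h1 : (0:ℝ) ≤ c^2 - 1 := by nlinarith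
          nlinarith [mul_nonneg (mul_nonneg (by positivity : (0:ℝ) ≤ 4*c^2) h1) (sq_nonneg (c-a))]
  have h3 : 0 ≤ 2*a*c - a*c^3 - c^2
      + Real.sqrt (c^3*(a^2*c^3 - 6*a*c^2 + 4*a + 4*c^3 - 3*c)) := by linarith
  have hden : 0 < 2*c^2*(c^2 - 1)^2 := by
    have h1 : 0 < c*(c^2 - 1) := by nlinarith
    nlinarith [mul_pos h1 h1]
  apply div_nonneg _ hden.le
  have h1 : 0 ≤ 1 - a*c := by linarith
  positivity
end

section
/- Let c, a, K_W, κ be reals with K_W > 0, κ > 0, |c| ≤ 1, c ≠ a, h = κ(1 − c²) + K_W(1 − a²), K∞ = (−h + √(h² + 4(c − a)²K_W κ))/(2(c − a)²), and F = c − M(c − a) where M = (K_W + cK∞(c − a))/(κ + K_W + (c − a)²K∞). Then |F| < 1, i.e., the steady-state Kalman filter error dynamics for the IID-input strategy are asymptotically stable. -/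
/-!
`K∞` is the positive root of the Riccati equation `(c - a)² K² + h K - K_W κ = 0`. Once the gain
`M` is substituted, this equation becomes the Lyapunov equation of the error recursion
`E' = F E - M Z + (1 - M) W`, namely `K∞ = F² K∞ + M² κ + (1 - M)² K_W`. Since `K∞ > 0` and the
noise term `M² κ + (1 - M)² K_W` is positive (`M` and `1 - M` cannot both vanish), this forces
`F² < 1`.
-/

theorem abs_lt_one_of_lyapunov {F M K κ KW : ℝ} (hκ : 0 < κ) (hKW : 0 < KW) (hK : 0 < K)
    (hlyap : K = F ^ 2 * K + M ^ 2 * κ + (1 - M) ^ 2 * KW) : |F| < 1 := by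
  have hnoise : 0 < M ^ 2 * κ + (1 - M) ^ 2 * KW := by
    rcases eq_or_ne M 0 with rfl | hM
    · simpa using hKW
    · exact add_pos_of_pos_of_nonneg (by positivity) (by positivity)
  have hF2 : F ^ 2 < 1 := by nlinarith
  exact (sq_lt_one_iff_abs_lt_one F).mp hF2

theorem pos_root_of_quadratic {p q h K : ℝ} (hp : 0 < p) (hq : 0 < q)
    (hK : K = (-h + √(h ^ 2 + 4 * p * q)) / (2 * p)) :
    0 < K ∧ p * K ^ 2 + h * K - q = 0 := by
  have hdisc : 0 ≤ h ^ 2 + 4 * p * q := by positivity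
  have hsqrt := Real.sq_sqrt hdisc
  refine ⟨hK ▸ div_pos ?_ (by positivity), ?_⟩
  · nlinarith [Real.sqrt_nonneg (h ^ 2 + 4 * p * q)]
  · have hdiscrim : discrim p h (-q) = √(h ^ 2 + 4 * p * q) * √(h ^ 2 + 4 * p * q) := by
      rw [discrim, ← sq, hsqrt]; ring
    have hroot := (quadratic_eq_zero_iff hp.ne' hdiscrim K).mpr (Or.inl hK)
    linear_combination hroot

/-- The steady-state gain `M(K, 0, κ)` of the AGN channel with ARMA(a, c) noise. -/
noncomputable def steadyGain (c a KW κ K : ℝ) : ℝ :=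
  (KW + c * K * (c - a)) / (κ + KW + (c - a) ^ 2 * K)

theorem lyapunov_of_riccati {c a KW κ K : ℝ} (hKW : 0 < KW) (hκ : 0 < κ) (hK : 0 ≤ K)
    (hriccati : (c - a) ^ 2 * K ^ 2 + (κ * (1 - c ^ 2) + KW * (1 - a ^ 2)) * K - KW * κ = 0) :
    let M := steadyGain c a KW κ K
    K = (c - M * (c - a)) ^ 2 * K + M ^ 2 * κ + (1 - M) ^ 2 * KW := by
  intro M
  have hD : 0 < κ + KW + (c - a) ^ 2 * K := by positivity
  simp only [M, steadyGain]
  field_simp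
  linear_combination (κ + KW + (c - a) ^ 2 * K) * hriccati

theorem nonfeedback_error_dynamics_stable_general
    (c a KW κ : ℝ) (hKW : 0 < KW) (hκ : 0 < κ) (hca : c ≠ a) :
    let h := κ*(1 - c^2) + KW*(1 - a^2)
    let Kinf := (-h + Real.sqrt (h^2 + 4*(c - a)^2*KW*κ)) / (2*(c - a)^2)
    let M := (KW + c*Kinf*(c - a)) / (κ + KW + (c - a)^2*Kinf)
    let F := c - M*(c - a)
    |F| < 1 := by
  intro h Kinf M F
  have hd : 0 < (c - a) ^ 2 := by positivity [sub_ne_zero.mpr hca]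
  obtain ⟨hKpos, hriccati⟩ :=
    pos_root_of_quadratic (K := Kinf) hd (mul_pos hKW hκ) (by rw [← mul_assoc _ KW κ])
  exact abs_lt_one_of_lyapunov hκ hKW hKpos (lyapunov_of_riccati hKW hκ hKpos.le hriccati)

/-- The steady-state Kalman error dynamics of the IID-input strategy are
asymptotically stable: |F| < 1. -/
theorem nonfeedback_error_dynamics_stable
    (c a KW κ : ℝ) (hKW : 0 < KW) (hκ : 0 < κ) (hc : |c| ≤ 1) (hca : c ≠ a) :
    let h := κ*(1 - c^2) + KW*(1 - a^2)
    let Kinf := (-h + Real.sqrt (h^2 + 4*(c - a)^2*KW*κ)) / (2*(c - a)^2)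
    let M := (KW + c*Kinf*(c - a)) / (κ + KW + (c - a)^2*Kinf)
    let F := c - M*(c - a)
    |F| < 1 :=
  nonfeedback_error_dynamics_stable_general c a KW κ hKW hκ hca
end

section
/- Let K_W > 0, κ > 0, c ∈ (1, √2) ∪ (√2, ∞), a ∈ [−c/(c² − 2), 1/c], c ≠ a, and suppose κ > κ_min where κ_min = K_W(1 − ac)(2ac − ac³ − c² + √(c³(a²c³ − 6ac² + 4a + 4c³ − 3c)))/(2c²(c² − 1)²). Then the argument of the logarithm in the capacity formula, (cK_W(c − 2a + a²c) + c²κ(c² − 1))/(K_W(c² − 1)), is strictly greater than 1, so C∞(κ) = (1/2)log((cK_W(c − 2a + a²c) + c²κ(c² − 1))/(K_W(c² − 1))) > 0. -/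
/-- In Regime A with κ > κ_min, the argument of the logarithm exceeds 1,
so the feedback capacity is strictly positive. -/
theorem capacity_positive_regimeA
    (KW κ c a : ℝ) (hKW : 0 < KW) (hκ : 0 < κ)
    (hc : c ∈ Set.Ioo 1 (Real.sqrt 2) ∪ Set.Ioi (Real.sqrt 2))
    (ha₁ : -c/(c^2 - 2) ≤ a) (ha₂ : a ≤ 1/c) (hca : c ≠ a)
    (hκmin : κ > KW*(1 - a*c)*(2*a*c - a*c^3 - c^2
        + Real.sqrt (c^3*(a^2*c^3 - 6*a*c^2 + 4*a + 4*c^3 - 3*c)))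
        / (2*c^2*(c^2 - 1)^2)) :
    1 < (c*KW*(c - 2*a + a^2*c) + c^2*κ*(c^2 - 1)) / (KW*(c^2 - 1)) ∧
    0 < (1/2) * Real.log ((c*KW*(c - 2*a + a^2*c) + c^2*κ*(c^2 - 1)) / (KW*(c^2 - 1))) := by
  have h1 : 1 < c := by
    rcases hc with h | h
    · exact h.1
    · have : (1:ℝ) < Real.sqrt 2 := by
        rw [show (1:ℝ) = Real.sqrt 1 by simp]
        exact Real.sqrt_lt_sqrt (by norm_num) (by norm_num)
      linarith [h.out]
  have hden : 0 < KW * (c^2 - 1) := mul_pos hKW (by nlinarith)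
  have hgt : 1 < (c*KW*(c - 2*a + a^2*c) + c^2*κ*(c^2 - 1)) / (KW*(c^2 - 1)) := by
    rw [lt_div_iff₀ hden]
    nlinarith [sq_nonneg (a*c - 1), mul_pos hκ (mul_pos (by nlinarith : (0:ℝ) < c^2) (by nlinarith : (0:ℝ) < c^2 - 1))]
  exact ⟨hgt, by have := Real.log_pos hgt; linarith⟩
end
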